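/- arXiv:2006.14070 — 2 statements merged into one kernel-verified Lean document; each statement's English description precedes it below -/
import Mathlib

section
/- For every n ≥ 2, the number of standard puzzles of shape 2×n with support {A, B, C, D} = {(1,2,3,4), (1,2,4,3), (1,3,2,4), (1,3,4,2)} equals 4·(2n−1)!!/3, where (2n−1)!! = 1·3·5···(2n−1). -/
/-- The rank (1-based) of entry `i` among the four entries of `q`. -/
def puzzleRank {N : ℕ} (q : Fin 4 → Fin N) (i : Fin 4) : ℕ :=
  (Finset.univ.filter (fun k => q k ≤ q i)).card

/-- The pattern (order-isomorphism type) of the `j`-th piece of a 2×n array `f`,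
read bottom-left, bottom-right, top-right, top-left. Row `0` is the bottom row. -/
def piece {n : ℕ} (f : Fin 2 × Fin n → Fin (2 * n)) (j : ℕ) (hj : j + 1 < n) :
    ℕ × ℕ × ℕ × ℕ :=
  let q : Fin 4 → Fin (2 * n) :=
    ![f (0, ⟨j, Nat.lt_of_succ_lt hj⟩), f (0, ⟨j + 1, hj⟩),
      f (1, ⟨j + 1, hj⟩), f (1, ⟨j, Nat.lt_of_succ_lt hj⟩)]
  (puzzleRank q 0, puzzleRank q 1, puzzleRank q 2, puzzleRank q 3)

/-- The number of standard puzzles of shape 2×n all of whose pieces lie in `P`. -/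
noncomputable def puzzleCount (n : ℕ) (P : Set (ℕ × ℕ × ℕ × ℕ)) : ℕ :=
  Nat.card {f : (Fin 2 × Fin n) ≃ Fin (2 * n) //
    ∀ j (hj : j + 1 < n), piece f j hj ∈ P}

/-!
In a puzzle with support `{A, B, C, D}` the bottom-left entry of every piece is its least entry,
so the bottom row increases and every top entry exceeds the bottom entry to its left (or below
it, in the first column): the least value sits in the bottom-left corner. For `n ≥ 2`, deleting the
first column of a `2 × (n + 1)` puzzle and relabelling the remaining values order-preservingly gives
a `2 × n` puzzle. Conversely a `2 × n` puzzle and any value `t` other than the least for the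
top-left corner give back a `2 × (n + 1)` puzzle: in the new first piece the bottom-right entry is
smaller than the top-right one, because that is the bottom-left versus the top-left entry of the
first piece of the smaller puzzle. So each added column multiplies the count by `2n + 1`, and there
are `4` puzzles of shape `2 × 2`.
-/

open Function

abbrev ABCD : Set (ℕ × ℕ × ℕ × ℕ) := {(1, 2, 3, 4), (1, 2, 4, 3), (1, 3, 2, 4), (1, 3, 4, 2)}

section Patterns

variable {α : Type*} [LinearOrder α]

/-- `A`, `B`, `C`, `D` are exactly the patterns in which the bottom-left entry is the least and the
bottom-right entry is not the greatest. -/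
def InABCD (a b c d : α) : Prop := a < b ∧ a < c ∧ a < d ∧ (b < c ∨ b < d)

instance (a b c d : α) : Decidable (InABCD a b c d) := by unfold InABCD; infer_instance

lemma StrictMono.inABCD_iff {β : Type*} [LinearOrder β] {e : α → β} (he : StrictMono e)
    {a b c d : α} : InABCD (e a) (e b) (e c) (e d) ↔ InABCD a b c d := by
  simp only [InABCD, he.lt_iff_lt]

end Patterns

section Rank

variable {N : ℕ} {q : Fin 4 → Fin N} {i k : Fin 4}

lemma puzzleRank_le_puzzleRank (h : q i ≤ q k) : puzzleRank q i ≤ puzzleRank q k :=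
  Finset.card_le_card (Finset.monotone_filter_right _ fun _ _ hl => hl.trans h)

lemma puzzleRank_lt_puzzleRank (h : q i < q k) : puzzleRank q i < puzzleRank q k := by
  refine Finset.card_lt_card ((Finset.ssubset_iff_of_subset
    (Finset.monotone_filter_right _ fun _ _ hl => hl.trans h.le)).2 ⟨k, ?_, ?_⟩) <;> simp [h]

lemma puzzleRank_lt_puzzleRank_iff : puzzleRank q i < puzzleRank q k ↔ q i < q k :=
  ⟨fun h => lt_of_not_ge fun h' => (puzzleRank_le_puzzleRank h').not_gt h,
    puzzleRank_lt_puzzleRank⟩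

lemma puzzleRank_ne_puzzleRank (h : q i ≠ q k) : puzzleRank q i ≠ puzzleRank q k :=
  h.lt_or_gt.elim (fun h => (puzzleRank_lt_puzzleRank h).ne) fun h =>
    (puzzleRank_lt_puzzleRank h).ne'

lemma puzzleRank_mem_Icc : puzzleRank q i ∈ Set.Icc 1 4 :=
  ⟨Finset.card_pos.2 ⟨i, by simp⟩, (Finset.card_filter_le _ _).trans (by simp)⟩

end Rank

lemma rankTuple_mem_ABCD_iff {N : ℕ} (q : Fin 4 → Fin N) (h12 : q 1 ≠ q 2) (h13 : q 1 ≠ q 3)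
    (h23 : q 2 ≠ q 3) :
    (puzzleRank q 0, puzzleRank q 1, puzzleRank q 2, puzzleRank q 3) ∈ ABCD ↔
      InABCD (q 0) (q 1) (q 2) (q 3) := by
  have h0 := puzzleRank_mem_Icc (q := q) (i := 0)
  have h1 := puzzleRank_mem_Icc (q := q) (i := 1)
  have h2 := puzzleRank_mem_Icc (q := q) (i := 2)
  have h3 := puzzleRank_mem_Icc (q := q) (i := 3)
  have r12 := puzzleRank_ne_puzzleRank h12
  have r13 := puzzleRank_ne_puzzleRank h13
  have r23 := puzzleRank_ne_puzzleRank h23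
  simp only [InABCD, ← puzzleRank_lt_puzzleRank_iff, ABCD, Set.mem_insert_iff,
    Set.mem_singleton_iff, Prod.mk.injEq, Set.mem_Icc] at *
  omega

lemma piece_mem_ABCD_iff {n : ℕ} {f : Fin 2 × Fin n → Fin (2 * n)} (hf : Injective f) (j : ℕ)
    (hj : j + 1 < n) :
    piece f j hj ∈ ABCD ↔ InABCD (f (0, ⟨j, by omega⟩)) (f (0, ⟨j + 1, hj⟩)) (f (1, ⟨j + 1, hj⟩))
      (f (1, ⟨j, by omega⟩)) :=
  rankTuple_mem_ABCD_iff _ (hf.ne (by simp)) (hf.ne (by simp)) (hf.ne (by simp))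

section Puzzle

variable {α : Type*} [LinearOrder α] {n : ℕ}

def IsABCDPuzzle (f : Fin 2 × Fin n → α) : Prop :=
  ∀ j (hj : j + 1 < n), InABCD (f (0, ⟨j, by omega⟩)) (f (0, ⟨j + 1, hj⟩)) (f (1, ⟨j + 1, hj⟩))
    (f (1, ⟨j, by omega⟩))

abbrev ABCDPuzzles (n : ℕ) (α : Type*) [LinearOrder α] :=
  {f : Fin 2 × Fin n ≃ α // IsABCDPuzzle f}

lemma puzzleCount_ABCD (n : ℕ) :
    puzzleCount n ABCD = Nat.card (ABCDPuzzles n (Fin (2 * n))) :=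
  Nat.card_congr <| Equiv.subtypeEquivRight fun f =>
    forall₂_congr fun j hj => piece_mem_ABCD_iff f.injective j hj

lemma StrictMono.isABCDPuzzle_comp_iff {β : Type*} [LinearOrder β] {e : α → β} (he : StrictMono e)
    {f : Fin 2 × Fin n → α} : IsABCDPuzzle (e ∘ f) ↔ IsABCDPuzzle f :=
  forall₂_congr fun _ _ => he.inABCD_iff

def dropFirstColumn (f : Fin 2 × Fin (n + 1) → α) (x : Fin 2 × Fin n) : α := f (x.1, x.2.succ)

lemma isABCDPuzzle_iff_inABCD_and_dropFirstColumn (f : Fin 2 × Fin (n + 2) → α) :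
    IsABCDPuzzle f ↔
      InABCD (f (0, 0)) (f (0, 1)) (f (1, 1)) (f (1, 0)) ∧ IsABCDPuzzle (dropFirstColumn f) := by
  refine ⟨fun h => ⟨h 0 (by omega), fun j hj => h (j + 1) (by omega)⟩, ?_⟩
  rintro ⟨h0, h⟩ (_ | j) hj
  exacts [h0, h j (by omega)]

lemma IsABCDPuzzle.apply_zero_zero_le {f : Fin 2 × Fin (n + 2) → α} (hf : IsABCDPuzzle f)
    (x : Fin 2 × Fin (n + 2)) : f (0, 0) ≤ f x := by
  have bottom : ∀ j (hj : j < n + 2), f (0, 0) ≤ f (0, ⟨j, hj⟩) := by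
    intro j
    induction j with
    | zero => exact fun _ => le_rfl
    | succ j ih => exact fun hj => (ih (by omega)).trans (hf j hj).1.le
  obtain ⟨i, j, hj⟩ := x
  match i, j with
  | 0, j => exact bottom j hj
  | 1, 0 => exact (hf 0 (by omega)).2.2.1.le
  | 1, j + 1 => exact (bottom j (by omega)).trans (hf j hj).2.1.le

lemma isABCDPuzzle_iff_dropFirstColumn {f : Fin 2 × Fin (n + 3) → α} (hf : Injective f)
    (hmin : ∀ x, f (0, 0) ≤ f x) : IsABCDPuzzle f ↔ IsABCDPuzzle (dropFirstColumn f) := by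
  rw [isABCDPuzzle_iff_inABCD_and_dropFirstColumn]
  refine ⟨And.right, fun h => ⟨?_, h⟩⟩
  have lt x (hx : x ≠ (0, 0)) : f (0, 0) < f x := (hmin x).lt_of_ne (hf.ne hx.symm)
  exact ⟨lt _ (by simp), lt _ (by simp), lt _ (by simp), Or.inl (h 0 (by omega)).2.2.1⟩

end Puzzle

section FirstColumn

variable {β : Type*} {n : ℕ}

def firstColumn (n : ℕ) : Set (Fin 2 × Fin (n + 1)) := {x | x.2 = 0}

def finTwoEquivFirstColumn : Fin 2 ≃ firstColumn n where
  toFun i := ⟨(i, 0), rfl⟩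
  invFun x := x.1.1
  left_inv _ := rfl
  right_inv := by rintro ⟨⟨i, j⟩, rfl : j = 0⟩; rfl

def firstColumnComplEquiv : ((firstColumn n)ᶜ : Set _) ≃ Fin 2 × Fin n where
  toFun x := (x.1.1, x.1.2.pred x.2)
  invFun y := ⟨(y.1, y.2.succ), Fin.succ_ne_zero _⟩
  left_inv x := Subtype.ext (Prod.ext rfl (Fin.succ_pred _ x.2))
  right_inv _ := Prod.ext rfl (Fin.pred_succ _ (h := Fin.succ_ne_zero _))

open Classical in
noncomputable def equivFixFirstColumn (c : Fin 2 → β) (hc : Injective c) :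
    {f : Fin 2 × Fin (n + 1) ≃ β // ∀ i, f (i, 0) = c i} ≃
      (Fin 2 × Fin n ≃ ((Set.range c)ᶜ : Set β)) :=
  (Equiv.subtypeEquivRight fun f =>
    ⟨fun h => by rintro ⟨⟨i, j⟩, rfl : j = 0⟩; exact h i,
      fun h i => h (finTwoEquivFirstColumn i)⟩).trans <|
  (Equiv.Set.compl (finTwoEquivFirstColumn.symm.trans (Equiv.ofInjective c hc))).trans
    (firstColumnComplEquiv.equivCongr (Equiv.refl _))

lemma coe_equivFixFirstColumn_apply (c : Fin 2 → β) (hc : Injective c)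
    (f : {f : Fin 2 × Fin (n + 1) ≃ β // ∀ i, f (i, 0) = c i}) (x : Fin 2 × Fin n) :
    (equivFixFirstColumn c hc f x : β) = dropFirstColumn f.1 x := by
  unfold equivFixFirstColumn
  rfl

end FirstColumn

section Count

variable {n : ℕ}

def ABCDPuzzles.congr {α β : Type*} [LinearOrder α] [LinearOrder β] (e : α ≃o β) :
    ABCDPuzzles n α ≃ ABCDPuzzles n β :=
  Equiv.subtypeEquiv (Equiv.equivCongr (Equiv.refl _) e.toEquiv) fun _ =>
    e.strictMono.isABCDPuzzle_comp_iff.symm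

lemma IsABCDPuzzle.apply_zero_zero_eq_zero {m : ℕ} [NeZero m] {f : Fin 2 × Fin (n + 2) ≃ Fin m}
    (hf : IsABCDPuzzle f) : f (0, 0) = 0 :=
  le_antisymm (by simpa using hf.apply_zero_zero_le (f.symm 0)) (Fin.zero_le _)

lemma isABCDPuzzle_and_apply_one_zero_iff {m : ℕ} [NeZero m] {f : Fin 2 × Fin (n + 3) ≃ Fin m}
    {τ : Fin m} :
    IsABCDPuzzle f ∧ f (1, 0) = τ ↔
      (∀ i, f (i, 0) = ![0, τ] i) ∧ IsABCDPuzzle (dropFirstColumn f) := by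
  simp only [Fin.forall_fin_two, Matrix.cons_val_zero, Matrix.cons_val_one]
  constructor
  · rintro ⟨hf, rfl⟩
    have h0 := hf.apply_zero_zero_eq_zero
    exact ⟨⟨h0, rfl⟩,
      (isABCDPuzzle_iff_dropFirstColumn f.injective fun x => h0 ▸ Fin.zero_le (f x)).1 hf⟩
  · rintro ⟨⟨h0, rfl⟩, hf⟩
    exact ⟨(isABCDPuzzle_iff_dropFirstColumn f.injective fun x => h0 ▸ Fin.zero_le (f x)).2 hf,
      rfl⟩

lemma card_range_pair_compl {m : ℕ} {τ : Fin (m + 2)} (hτ : τ ≠ 0) :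
    Fintype.card ((Set.range ![0, τ])ᶜ : Set (Fin (m + 2))) = m := by
  rw [Fintype.card_compl_set, Set.card_range_of_injective (injective_pair_iff_ne.2 hτ.symm)]
  simp

noncomputable def ABCDPuzzles.fiberEquiv (τ : {τ : Fin (2 * (n + 3)) // τ ≠ 0}) :
    {F : ABCDPuzzles (n + 3) (Fin (2 * (n + 3))) // F.1 (1, 0) = τ} ≃
      ABCDPuzzles (n + 2) (Fin (2 * (n + 2))) :=
  (Equiv.subtypeSubtypeEquivSubtypeInter _ _).trans <|
  (Equiv.subtypeEquivRight fun _ => isABCDPuzzle_and_apply_one_zero_iff).trans <|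
  (Equiv.subtypeSubtypeEquivSubtypeInter _ _).symm.trans <|
  (Equiv.subtypeEquiv (equivFixFirstColumn _ (injective_pair_iff_ne.2 τ.2.symm)) fun f => by
    rw [← (Subtype.strictMono_coe (· ∈ (Set.range ![0, τ.1])ᶜ)).isABCDPuzzle_comp_iff]
    exact iff_of_eq (congrArg _ (funext (coe_equivFixFirstColumn_apply _ _ f)).symm)).trans <|
  ABCDPuzzles.congr (Fintype.orderIsoFinOfCardEq _ (card_range_pair_compl τ.2)).symm

lemma card_subtype_fin_ne_zero (m : ℕ) [NeZero m] : Nat.card {τ : Fin m // τ ≠ 0} = m - 1 := by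
  rw [Nat.card_eq_fintype_card, Fintype.card_subtype_compl, Fintype.card_subtype_eq,
    Fintype.card_fin]

lemma card_ABCDPuzzles_add_three (n : ℕ) :
    Nat.card (ABCDPuzzles (n + 3) (Fin (2 * (n + 3)))) =
      (2 * n + 5) * Nat.card (ABCDPuzzles (n + 2) (Fin (2 * (n + 2)))) := by
  let firstTop (F : ABCDPuzzles (n + 3) (Fin (2 * (n + 3)))) : {τ : Fin (2 * (n + 3)) // τ ≠ 0} :=
    ⟨F.1 (1, 0), F.2.apply_zero_zero_eq_zero ▸ F.1.injective.ne (by simp)⟩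
  rw [Nat.card_congr ((Equiv.sigmaFiberEquiv firstTop).symm.trans
    ((Equiv.sigmaCongrRight fun τ =>
      (Equiv.subtypeEquivRight fun _ => Subtype.ext_iff).trans (ABCDPuzzles.fiberEquiv τ)).trans
      (Equiv.sigmaEquivProd _ _))), Nat.card_prod,
    card_subtype_fin_ne_zero, show 2 * (n + 3) - 1 = 2 * n + 5 by omega]

end Count

lemma card_ABCDPuzzles_two : Nat.card (ABCDPuzzles 2 (Fin (2 * 2))) = 4 := by
  refine (Nat.card_congr (Equiv.subtypeEquivRight fun f : Fin 2 × Fin 2 ≃ Fin (2 * 2) =>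
    (isABCDPuzzle_iff_inABCD_and_dropFirstColumn f).trans
      (and_iff_left fun j (hj : j + 1 < 1) => by omega))).trans ?_
  rw [Nat.card_eq_fintype_card]
  decide

theorem stmt12 (n : ℕ) (hn : 2 ≤ n) :
    3 * puzzleCount n {(1, 2, 3, 4), (1, 2, 4, 3), (1, 3, 2, 4), (1, 3, 4, 2)}
      = 4 * Nat.doubleFactorial (2 * n - 1) := by
  rw [puzzleCount_ABCD]
  induction n, hn using Nat.le_induction with
  | base => rw [card_ABCDPuzzles_two]; rfl
  | succ n hn ih =>
    obtain ⟨n, rfl⟩ := Nat.exists_eq_add_of_le' hn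
    rw [card_ABCDPuzzles_add_three, mul_left_comm, ih,
      show 2 * (n + 2 + 1) - 1 = 2 * (n + 2) - 1 + 2 by omega, Nat.doubleFactorial_add_two,
      show 2 * (n + 2) - 1 + 2 = 2 * n + 5 by omega]
    ring
end

section
/- For every n ≥ 2, the number of standard puzzles of shape 2×n with support {A, C, X} = {(1,2,3,4), (1,3,2,4), (4,2,3,1)} equals the Fibonacci number F_{n+2}, where F_1 = F_2 = 1. -/
/-!
In an `{A, C, X}`-puzzle every piece nests column `j + 1` strictly inside column `j`: the column
minimum grows and the column maximum drops. The `2n` column minima and maxima thus form a strictly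
increasing chain in `[0, 2n)`, so column `j` holds exactly `{j, 2n - 1 - j}` and the puzzle is
determined by which row carries the larger entry of each column. Consecutive orientations
(small below, small below), (small below, large below), (large below, small below) give the pieces
`A`, `C`, `X`, while two consecutive columns with the large entry below give `(4, 3, 2, 1)`. So the
puzzles correspond to binary words of length `n` without two consecutive `1`s, counted by
`F (n + 2)`.
-/

def acxPatterns : Set (ℕ × ℕ × ℕ × ℕ) := {(1, 2, 3, 4), (1, 3, 2, 4), (4, 2, 3, 1)}

section Rank

variable {N : ℕ} (q : Fin 4 → Fin N)

lemma puzzleRank_pos (i : Fin 4) : 0 < puzzleRank q i :=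
  Finset.card_pos.2 ⟨i, by simp⟩

lemma puzzleRank_le_four (i : Fin 4) : puzzleRank q i ≤ 4 :=
  (Finset.card_filter_le _ _).trans (by simp)

lemma puzzleRank_lt_puzzleRank_iff_s13 {a b : Fin 4} :
    puzzleRank q a < puzzleRank q b ↔ q a < q b := by
  refine ⟨fun h => lt_of_not_ge fun hba => h.not_ge ?_, fun h => Finset.card_lt_card ?_⟩
  · exact Finset.card_le_card (Finset.monotone_filter_right _ fun _ _ hk => hk.trans hba)
  · exact Finset.ssubset_iff_of_subset (Finset.monotone_filter_right _ fun _ _ hk => hk.trans h.le)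
      |>.2 ⟨b, by simp, by simpa using h⟩

lemma rankPattern_mem_acxPatterns_iff :
    (puzzleRank q 0, puzzleRank q 1, puzzleRank q 2, puzzleRank q 3) ∈ acxPatterns ↔
      (q 0 < q 1 ∧ q 1 < q 2 ∧ q 2 < q 3) ∨ (q 0 < q 2 ∧ q 2 < q 1 ∧ q 1 < q 3) ∨
        (q 3 < q 1 ∧ q 1 < q 2 ∧ q 2 < q 0) := by
  simp only [acxPatterns, Set.mem_insert_iff, Set.mem_singleton_iff, Prod.mk.injEq,
    ← puzzleRank_lt_puzzleRank_iff_s13 q]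
  have := puzzleRank_pos q 0; have := puzzleRank_pos q 1
  have := puzzleRank_pos q 2; have := puzzleRank_pos q 3
  have := puzzleRank_le_four q 0; have := puzzleRank_le_four q 1
  have := puzzleRank_le_four q 2; have := puzzleRank_le_four q 3
  omega

end Rank

def NoConsecutiveTrue {n : ℕ} (ε : Fin n → Bool) : Prop :=
  ∀ j (hj : j + 1 < n), ε ⟨j, Nat.lt_of_succ_lt hj⟩ = true → ε ⟨j + 1, hj⟩ = false

section NoConsecutiveTrue

variable {n : ℕ}

lemma noConsecutiveTrue_of_le_one (hn : n ≤ 1) (ε : Fin n → Bool) : NoConsecutiveTrue ε :=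
  fun _ hj => absurd hj (by omega)

lemma NoConsecutiveTrue.tail {ε : Fin (n + 1) → Bool} (h : NoConsecutiveTrue ε) :
    NoConsecutiveTrue (Fin.tail ε) :=
  fun j hj => h (j + 1) (by omega)

lemma noConsecutiveTrue_cons_false {ε : Fin n → Bool} :
    NoConsecutiveTrue (Fin.cons false ε : Fin (n + 1) → Bool) ↔ NoConsecutiveTrue ε := by
  refine ⟨NoConsecutiveTrue.tail, ?_⟩
  rintro h (_ | j) hj hεj
  · simp at hεj
  · exact h j (by omega) hεj

lemma noConsecutiveTrue_cons_true {ε : Fin (n + 1) → Bool} :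
    NoConsecutiveTrue (Fin.cons true ε : Fin (n + 2) → Bool) ↔
      ε 0 = false ∧ NoConsecutiveTrue ε := by
  refine ⟨fun h => ⟨h 0 (by omega) rfl, h.tail⟩, ?_⟩
  rintro ⟨h0, h⟩ (_ | j) hj
  · exact fun _ => h0
  · exact h j (by omega)

def noConsecutiveTrueEquivSum :
    {ε : Fin (n + 2) → Bool // NoConsecutiveTrue ε} ≃
      {ε : Fin (n + 1) → Bool // NoConsecutiveTrue ε} ⊕
        {ε : Fin n → Bool // NoConsecutiveTrue ε} where
  toFun ε :=
    if ε.1 0 then .inr ⟨Fin.tail (Fin.tail ε.1), ε.2.tail.tail⟩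
    else .inl ⟨Fin.tail ε.1, ε.2.tail⟩
  invFun
    | .inl δ => ⟨Fin.cons false δ.1, noConsecutiveTrue_cons_false.2 δ.2⟩
    | .inr δ => ⟨Fin.cons true (Fin.cons false δ.1),
        noConsecutiveTrue_cons_true.2 ⟨rfl, noConsecutiveTrue_cons_false.2 δ.2⟩⟩
  left_inv := by
    rintro ⟨ε, hε⟩
    cases h0 : ε 0
    · simp only [h0, Bool.false_eq_true, ↓reduceIte, Subtype.mk.injEq]
      rw [← h0, Fin.cons_self_tail]
    · have h1 : ε 1 = false := hε 0 (by omega) h0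
      ext i
      refine Fin.cases ?_ (Fin.cases ?_ fun i => ?_) i <;> simp [h0, h1, Fin.tail]
  right_inv := by
    rintro (δ | δ) <;> simp

theorem card_noConsecutiveTrue :
    ∀ n, Nat.card {ε : Fin n → Bool // NoConsecutiveTrue ε} = Nat.fib (n + 2)
  | 0 | 1 => by
    rw [Nat.card_congr (Equiv.subtypeUnivEquiv (noConsecutiveTrue_of_le_one (by omega)))]
    simp [Nat.fib_add_two]
  | n + 2 => by
    rw [Nat.card_congr noConsecutiveTrueEquivSum, Nat.card_sum, card_noConsecutiveTrue (n + 1),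
      card_noConsecutiveTrue n, Nat.fib_add_two (n := n + 2), add_comm]

end NoConsecutiveTrue

lemma add_le_apply_add_of_forall_lt_succ {n : ℕ} {g : ℕ → ℕ}
    (hg : ∀ j, j + 1 < n → g j < g (j + 1)) (i d : ℕ) (h : i + d < n) :
    g i + d ≤ g (i + d) := by
  induction d with
  | zero => rfl
  | succ d ih =>
    have := hg (i + d) (by omega)
    have := ih (by omega)
    rw [← add_assoc i]
    omega

lemma apply_add_add_le_of_forall_succ_lt {n : ℕ} {g : ℕ → ℕ}
    (hg : ∀ j, j + 1 < n → g (j + 1) < g j) (i d : ℕ) (h : i + d < n) :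
    g (i + d) + d ≤ g i := by
  induction d with
  | zero => rfl
  | succ d ih =>
    have := hg (i + d) (by omega)
    have := ih (by omega)
    rw [← add_assoc i]
    omega

section Puzzle

variable {n : ℕ}

/-- Columns `j ≥ n` read as `0`. -/
def puzzleEntry (f : Fin 2 × Fin n → Fin (2 * n)) (i : Fin 2) (j : ℕ) : ℕ :=
  if h : j < n then f (i, ⟨j, h⟩) else 0

lemma puzzleEntry_of_lt (f : Fin 2 × Fin n → Fin (2 * n)) (i : Fin 2) {j : ℕ} (h : j < n) :
    puzzleEntry f i j = f (i, ⟨j, h⟩) :=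
  dif_pos h

lemma puzzleEntry_lt (f : Fin 2 × Fin n → Fin (2 * n)) (i : Fin 2) {j : ℕ} (h : j < n) :
    puzzleEntry f i j < 2 * n := by
  rw [puzzleEntry_of_lt f i h]; exact Fin.isLt _

lemma puzzleEntry_zero_ne_one (f : (Fin 2 × Fin n) ≃ Fin (2 * n)) {j : ℕ} (h : j < n) :
    puzzleEntry f 0 j ≠ puzzleEntry f 1 j := by
  rw [puzzleEntry_of_lt f 0 h, puzzleEntry_of_lt f 1 h, Ne, Fin.val_inj, f.apply_eq_iff_eq]
  simp

lemma piece_mem_acxPatterns_iff (f : Fin 2 × Fin n → Fin (2 * n)) (j : ℕ) (hj : j + 1 < n) :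
    piece f j hj ∈ acxPatterns ↔
      (puzzleEntry f 0 j < puzzleEntry f 0 (j + 1) ∧
          puzzleEntry f 0 (j + 1) < puzzleEntry f 1 (j + 1) ∧
          puzzleEntry f 1 (j + 1) < puzzleEntry f 1 j) ∨
        (puzzleEntry f 0 j < puzzleEntry f 1 (j + 1) ∧
          puzzleEntry f 1 (j + 1) < puzzleEntry f 0 (j + 1) ∧
          puzzleEntry f 0 (j + 1) < puzzleEntry f 1 j) ∨
        (puzzleEntry f 1 j < puzzleEntry f 0 (j + 1) ∧
          puzzleEntry f 0 (j + 1) < puzzleEntry f 1 (j + 1) ∧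
          puzzleEntry f 1 (j + 1) < puzzleEntry f 0 j) := by
  rw [puzzleEntry_of_lt f 0 hj, puzzleEntry_of_lt f 1 hj,
    puzzleEntry_of_lt f 0 (Nat.lt_of_succ_lt hj), puzzleEntry_of_lt f 1 (Nat.lt_of_succ_lt hj)]
  exact rankPattern_mem_acxPatterns_iff _

def columnMin (f : Fin 2 × Fin n → Fin (2 * n)) (j : ℕ) : ℕ :=
  min (puzzleEntry f 0 j) (puzzleEntry f 1 j)

def columnMax (f : Fin 2 × Fin n → Fin (2 * n)) (j : ℕ) : ℕ :=
  max (puzzleEntry f 0 j) (puzzleEntry f 1 j)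

def IsACXPuzzle (f : (Fin 2 × Fin n) ≃ Fin (2 * n)) : Prop :=
  ∀ j (hj : j + 1 < n), piece f j hj ∈ acxPatterns

namespace IsACXPuzzle

variable {f : (Fin 2 × Fin n) ≃ Fin (2 * n)} (hf : IsACXPuzzle f)
include hf

lemma columnMin_lt_succ (j : ℕ) (hj : j + 1 < n) : columnMin f j < columnMin f (j + 1) := by
  have := (piece_mem_acxPatterns_iff f j hj).1 (hf j hj)
  simp only [columnMin]
  omega

lemma columnMax_succ_lt (j : ℕ) (hj : j + 1 < n) : columnMax f (j + 1) < columnMax f j := by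
  have := (piece_mem_acxPatterns_iff f j hj).1 (hf j hj)
  simp only [columnMax]
  omega

lemma columnMin_columnMax_eq {j : ℕ} (hj : j < n) :
    columnMin f j = j ∧ columnMax f j = 2 * n - 1 - j := by
  have hlo := add_le_apply_add_of_forall_lt_succ hf.columnMin_lt_succ
  have hhi := apply_add_add_le_of_forall_succ_lt hf.columnMax_succ_lt
  have h₁ := hlo j (n - 1 - j) (by omega)
  have h₂ := hlo 0 j (by omega)
  have h₃ := hhi j (n - 1 - j) (by omega)
  have h₄ := hhi 0 j (by omega)
  have := puzzleEntry_zero_ne_one f (show n - 1 < n by omega)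
  have := puzzleEntry_lt f 0 (show 0 < n by omega)
  have := puzzleEntry_lt f 1 (show 0 < n by omega)
  simp only [show j + (n - 1 - j) = n - 1 by omega, zero_add, columnMin, columnMax] at *
  omega

end IsACXPuzzle

def columnOrientation (f : Fin 2 × Fin n → Fin (2 * n)) (j : Fin n) : Bool :=
  decide (puzzleEntry f 1 j < puzzleEntry f 0 j)

lemma IsACXPuzzle.puzzleEntry_eq {f : (Fin 2 × Fin n) ≃ Fin (2 * n)} (hf : IsACXPuzzle f)
    {j : ℕ} (hj : j < n) :
    puzzleEntry f 0 j = (if columnOrientation f ⟨j, hj⟩ then 2 * n - 1 - j else j) ∧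
      puzzleEntry f 1 j = (if columnOrientation f ⟨j, hj⟩ then j else 2 * n - 1 - j) := by
  obtain ⟨hmin, hmax⟩ := hf.columnMin_columnMax_eq hj
  have := puzzleEntry_zero_ne_one f hj
  simp only [columnMin, columnMax] at hmin hmax
  by_cases h : puzzleEntry f 1 j < puzzleEntry f 0 j <;> simp [columnOrientation, h] <;> omega

def acxModel (ε : Fin n → Bool) (p : Fin 2 × Fin n) : Fin (2 * n) :=
  if (p.1 = 0 ↔ ε p.2) then ⟨2 * n - 1 - p.2, by omega⟩ else ⟨p.2, by omega⟩

lemma puzzleEntry_acxModel (ε : Fin n → Bool) {j : ℕ} (hj : j < n) :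
    puzzleEntry (acxModel ε) 0 j = (if ε ⟨j, hj⟩ then 2 * n - 1 - j else j) ∧
      puzzleEntry (acxModel ε) 1 j = (if ε ⟨j, hj⟩ then j else 2 * n - 1 - j) := by
  simp only [puzzleEntry_of_lt _ _ hj, acxModel]
  cases ε ⟨j, hj⟩ <;> simp

lemma acxModel_injective (ε : Fin n → Bool) : Function.Injective (acxModel ε) := by
  rintro ⟨i, j⟩ ⟨i', j'⟩ h
  have hj := j.isLt
  have hj' := j'.isLt
  simp only [acxModel] at h
  obtain rfl : j = j' := by split_ifs at h <;> simp only [Fin.mk.injEq] at h <;> ext <;> omega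
  fin_cases i <;> fin_cases i' <;> split_ifs at h <;> simp_all <;> omega

lemma columnOrientation_acxModel (ε : Fin n → Bool) : columnOrientation (acxModel ε) = ε := by
  funext j
  obtain ⟨h0, h1⟩ := puzzleEntry_acxModel ε j.isLt
  cases hε : ε j <;> simp_all [columnOrientation] <;> omega

noncomputable def acxModelEquiv (ε : Fin n → Bool) : (Fin 2 × Fin n) ≃ Fin (2 * n) :=
  Equiv.ofBijective (acxModel ε)
    ((Fintype.bijective_iff_injective_and_card _).2 ⟨acxModel_injective ε, by simp [two_mul]⟩)

lemma coe_acxModelEquiv (ε : Fin n → Bool) : ⇑(acxModelEquiv ε) = acxModel ε :=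
  rfl

lemma isACXPuzzle_acxModelEquiv {ε : Fin n → Bool} (hε : NoConsecutiveTrue ε) :
    IsACXPuzzle (acxModelEquiv ε) := by
  intro j hj
  rw [piece_mem_acxPatterns_iff]
  obtain ⟨h0, h1⟩ := puzzleEntry_acxModel ε (Nat.lt_of_succ_lt hj)
  obtain ⟨h0', h1'⟩ := puzzleEntry_acxModel ε hj
  rw [coe_acxModelEquiv, h0, h1, h0', h1']
  have := hε j hj
  revert this
  cases ε ⟨j, Nat.lt_of_succ_lt hj⟩ <;> cases ε ⟨j + 1, hj⟩ <;> simp <;> omega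

lemma IsACXPuzzle.noConsecutiveTrue_columnOrientation {f : (Fin 2 × Fin n) ≃ Fin (2 * n)}
    (hf : IsACXPuzzle f) : NoConsecutiveTrue (columnOrientation f) := by
  intro j hj h
  have := (piece_mem_acxPatterns_iff f j hj).1 (hf j hj)
  simp only [columnOrientation, decide_eq_true_eq, decide_eq_false_iff_not] at h ⊢
  omega

lemma IsACXPuzzle.acxModelEquiv_columnOrientation {f : (Fin 2 × Fin n) ≃ Fin (2 * n)}
    (hf : IsACXPuzzle f) : acxModelEquiv (columnOrientation f) = f := by
  ext ⟨i, j⟩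
  obtain ⟨h0, h1⟩ := hf.puzzleEntry_eq j.isLt
  obtain ⟨h0', h1'⟩ := puzzleEntry_acxModel (columnOrientation f) j.isLt
  simp only [puzzleEntry_of_lt _ _ j.isLt] at h0 h1 h0' h1'
  fin_cases i
  · simp [coe_acxModelEquiv, h0, h0']
  · simp [coe_acxModelEquiv, h1, h1']

noncomputable def acxPuzzleEquivNoConsecutiveTrue :
    {f : (Fin 2 × Fin n) ≃ Fin (2 * n) // IsACXPuzzle f} ≃
      {ε : Fin n → Bool // NoConsecutiveTrue ε} where
  toFun f := ⟨columnOrientation f.1, f.2.noConsecutiveTrue_columnOrientation⟩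
  invFun ε := ⟨acxModelEquiv ε.1, isACXPuzzle_acxModelEquiv ε.2⟩
  left_inv f := Subtype.ext f.2.acxModelEquiv_columnOrientation
  right_inv ε := Subtype.ext (columnOrientation_acxModel ε.1)

end Puzzle

theorem stmt13_general (n : ℕ) :
    puzzleCount n {(1, 2, 3, 4), (1, 3, 2, 4), (4, 2, 3, 1)} = Nat.fib (n + 2) :=
  (Nat.card_congr acxPuzzleEquivNoConsecutiveTrue).trans (card_noConsecutiveTrue n)

theorem stmt13 (n : ℕ) (hn : 2 ≤ n) :
    puzzleCount n {(1, 2, 3, 4), (1, 3, 2, 4), (4, 2, 3, 1)} = Nat.fib (n + 2) :=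
  stmt13_general n
end
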